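/- Let q⁽¹⁾ and q⁽²⁾ be conservative Q-matrices on ℕ satisfying condition (1.2). Suppose there exists a function φ : ℕ → ℝ with φ_i ≥ 0 for all i, φ nondecreasing with φ_i → ∞ as i → ∞, and a constant c ≥ 0 such that for every i the family (q⁽²⁾ i j · (φ_j − φ_i))_j is summable and ∑_j q⁽²⁾ i j (φ_j − φ_i) ≤ c(1 + φ_i). Then both q⁽¹⁾ and q⁽²⁾ are regular. -/

import Mathlib

open scoped BigOperators
open Filter Topology

/-- Row `i` of `q` with the diagonal entry replaced by `0`
(used to form sums over the off-diagonal entries). -/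
noncomputable def offDiag (q : ℕ → ℕ → ℝ) (i j : ℕ) : ℝ :=
  if j = i then 0 else q i j

/-- `q` is a (totally stable) Q-matrix on `ℕ`: nonnegative off-diagonal entries,
nonpositive diagonal, and each row is summable off the diagonal with
`∑_{j ≠ i} q i j ≤ qᵢ := -q i i`. -/
def IsQMatrix (q : ℕ → ℕ → ℝ) : Prop :=
  (∀ i j, i ≠ j → 0 ≤ q i j) ∧
  (∀ i, q i i ≤ 0) ∧
  (∀ i, Summable (fun j => offDiag q i j)) ∧
  (∀ i, (∑' j, offDiag q i j) ≤ - q i i)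

/-- A Q-matrix is conservative if each row sums to `0`:
`∑_{j ≠ i} q i j = qᵢ = -q i i`. -/
def IsConservative (q : ℕ → ℕ → ℝ) : Prop :=
  ∀ i, (∑' j, offDiag q i j) = - q i i

/-- A Q-matrix is bounded if `sup_i qᵢ < ∞`. -/
def IsBoundedQ (q : ℕ → ℕ → ℝ) : Prop :=
  ∃ C : ℝ, ∀ i, - q i i ≤ C

/-- A substochastic transition function on `[0,∞)` (parametrized by `t : ℝ`,
with all conditions imposed for `t ≥ 0`). -/
def IsTransitionFunction (P : ℝ → ℕ → ℕ → ℝ) : Prop :=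
  (∀ t i j, 0 ≤ t → 0 ≤ P t i j) ∧
  (∀ t i, 0 ≤ t → Summable (fun j => P t i j)) ∧
  (∀ t i, 0 ≤ t → (∑' j, P t i j) ≤ 1) ∧
  (∀ i j, P 0 i j = if i = j then 1 else 0) ∧
  (∀ t s i j, 0 ≤ t → 0 ≤ s → P (t + s) i j = ∑' k, P t i k * P s k j)

/-- `P` satisfies the backward integral equation for the Q-matrix `q`:
`P t i j = δ_{ij} e^{-qᵢ t} + ∫_0^t e^{-qᵢ (t-s)} ∑_{k ≠ i} q i k P s k j ds`
(here `-qᵢ = q i i`). -/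
def BackwardEq (q : ℕ → ℕ → ℝ) (P : ℝ → ℕ → ℕ → ℝ) : Prop :=
  ∀ t i j, 0 ≤ t →
    P t i j = (if i = j then 1 else 0) * Real.exp (q i i * t) +
      ∫ s in (0:ℝ)..t,
        Real.exp (q i i * (t - s)) * (∑' k, if k = i then 0 else q i k * P s k j)

/-- `P` is the minimal Q-process for `q`: a substochastic transition function
satisfying the backward integral equation for `q`, which is pointwise below any
other such transition function. -/
def IsMinimalQProcess (q : ℕ → ℕ → ℝ) (P : ℝ → ℕ → ℕ → ℝ) : Prop :=
  IsTransitionFunction P ∧ BackwardEq q P ∧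
  ∀ P', IsTransitionFunction P' → BackwardEq q P' →
    ∀ t i j, 0 ≤ t → P t i j ≤ P' t i j

/-- `q` is regular (`IsRegularQ` to avoid a name clash with Mathlib): conservative, and the minimal Q-process is honest (stochastic). -/
def IsRegularQ (q : ℕ → ℕ → ℝ) : Prop :=
  IsConservative q ∧
  ∀ P, IsMinimalQProcess q P → ∀ t, 0 ≤ t → ∀ i, (∑' j, P t i j) = 1

/-- The tail sum `∑_{j ≥ k} f j`. -/
noncomputable def tailSum (f : ℕ → ℝ) (k : ℕ) : ℝ :=
  ∑' j, if k ≤ j then f j else 0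

/-- Condition (1.1): stochastic comparability of `P1` and `P2`. -/
def Cond11 (P1 P2 : ℝ → ℕ → ℕ → ℝ) : Prop :=
  ∀ t, 0 ≤ t → ∀ k i m, i ≤ m → tailSum (P1 t i) k ≤ tailSum (P2 t m) k

/-- Condition (1.2) for the Q-matrices `q1`, `q2`. -/
def Cond12 (q1 q2 : ℕ → ℕ → ℝ) : Prop :=
  ∀ i m, i ≤ m → ∀ k, (k ≤ i ∨ m + 1 ≤ k) →
    tailSum (q1 i) k ≤ tailSum (q2 m) k

/-- Condition (1.3) for the Q-matrices `q1`, `q2` (the conservative reduction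
of (1.2)). -/
def Cond13 (q1 q2 : ℕ → ℕ → ℝ) : Prop :=
  ∀ i m, i ≤ m →
    (∀ k, m + 1 ≤ k → tailSum (q1 i) k ≤ tailSum (q2 m) k) ∧
    (∀ k, k + 1 ≤ i →
      (∑ j ∈ Finset.range (k + 1), q2 m j) ≤ ∑ j ∈ Finset.range (k + 1), q1 i j)

/-!
With `ψ = 1 + φ` the hypothesis reads `Q⁽²⁾ψ ≤ c ψ`: rows of a conservative Q-matrix sum to
zero, so constants may be added to `φ` freely. Condition (1.2) with `i = m` puts the row tails
of `q⁽¹⁾` below those of `q⁽²⁾`, and since `ψ` is nondecreasing, Abel summation carries the drift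
bound over to `q⁽¹⁾`.

A conservative Q-matrix with such a norm-like drift function `ψ` is regular. The defect
`d_i(t) = 1 - ∑_j P t i j` of any transition function solving the backward equation solves the
backward equation without its inhomogeneous term. For `λ > max c 0` the weighted running maximum
`x_i = sup_{s ≤ t} e^{-λ s} d_i(s)` is then a bounded nonnegative solution of `λ x ≤ Q x`, and
a maximum principle based on `ψ` forces `x = 0`.
-/

open MeasureTheory
open Finset (range)
open Set (Icc Ici Ioc)

section TailSum

variable {f : ℕ → ℝ}

lemma summable_tail (hf : Summable f) (k : ℕ) : Summable fun j => if k ≤ j then f j else 0 :=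
  (hf.indicator {j | k ≤ j}).congr fun j => by simp [Set.indicator_apply]

lemma tailSum_eq_add_tailSum_succ (hf : Summable f) (k : ℕ) :
    tailSum f k = f k + tailSum f (k + 1) := by
  rw [tailSum, (summable_tail hf k).tsum_eq_add_tsum_ite k, if_pos le_rfl, tailSum]
  congr 1
  refine tsum_congr fun j => ?_
  rcases lt_trichotomy j k with h | rfl | h
  · simp [h.ne, not_le.2 h, show ¬ k + 1 ≤ j by omega]
  · simp
  · simp [h.ne', h.le, Nat.succ_le_of_lt h]

lemma sum_range_add_tailSum (hf : Summable f) (k : ℕ) :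
    ∑ j ∈ range k, f j + tailSum f k = ∑' j, f j := by
  induction k with
  | zero => simp [tailSum]
  | succ n ih => rw [Finset.sum_range_succ, ← ih, tailSum_eq_add_tailSum_succ hf n]; ring

lemma tendsto_tailSum_atTop_zero (hf : Summable f) : Tendsto (tailSum f) atTop (𝓝 0) := by
  have h : tailSum f = fun k => ∑' j, f j - ∑ j ∈ range k, f j :=
    funext fun k => eq_sub_of_add_eq' (sum_range_add_tailSum hf k)
  simpa [h] using (tendsto_const_nhds (x := ∑' j, f j)).sub hf.hasSum.tendsto_sum_nat

lemma tailSum_nonneg {k : ℕ} (h : ∀ j, k ≤ j → 0 ≤ f j) : 0 ≤ tailSum f k :=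
  tsum_nonneg fun j => by split_ifs with hj <;> simp [h j, hj]

lemma sum_range_mul_eq_sub (hf : Summable f) {w : ℕ → ℝ} (hw0 : w 0 = 0) (N : ℕ) :
    ∑ k ∈ range N, f k * w k
      = ∑ m ∈ range N, (w (m + 1) - w m) * tailSum f (m + 1) - w N * tailSum f N := by
  induction N with
  | zero => simp [hw0]
  | succ n ih =>
    rw [Finset.sum_range_succ, Finset.sum_range_succ, ih, tailSum_eq_add_tailSum_succ hf n]
    ring

lemma mul_tailSum_le_tailSum_mul {w : ℕ → ℝ} (hw : Monotone w) {N : ℕ} (hf : Summable f)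
    (hfw : Summable fun k => f k * w k) (hfN : ∀ k, N ≤ k → 0 ≤ f k) :
    w N * tailSum f N ≤ tailSum (fun k => f k * w k) N := by
  rw [tailSum, ← tsum_mul_left]
  refine (summable_tail hf N).mul_left _ |>.tsum_le_tsum (fun k => ?_) (summable_tail hfw N)
  split_ifs with hk
  · rw [mul_comm]; exact mul_le_mul_of_nonneg_left (hw hk) (hfN k hk)
  · simp

lemma summable_of_sum_range_le_of_nonneg_ge {c : ℝ} (n : ℕ) (hf : ∀ k, n ≤ k → 0 ≤ f k)
    (h : ∀ N, n ≤ N → ∑ k ∈ range N, f k ≤ c) : Summable f := by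
  rw [← summable_nat_add_iff n]
  refine summable_of_sum_range_le (c := c - ∑ k ∈ range n, f k) (fun k => hf _ (by omega))
    fun N => ?_
  have := h (n + N) (by omega)
  rw [Finset.sum_range_add] at this
  simp only [add_comm] at this ⊢
  linarith

end TailSum

section Comparison

variable {a b w : ℕ → ℝ} {i : ℕ}

lemma sum_range_mul_le_of_tailSum_le (hw : Monotone w) (hw0 : w 0 = 0)
    (ha : ∀ k, k ≠ i → 0 ≤ a k) (hb : ∀ k, k ≠ i → 0 ≤ b k) (hsa : Summable a)
    (hsb : Summable b) (hbw : Summable fun k => b k * w k)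
    (htail : ∀ k, tailSum a k ≤ tailSum b k) {N : ℕ} (hN : i < N) :
    ∑ k ∈ range N, a k * w k ≤ ∑ k ∈ range N, b k * w k + tailSum (fun k => b k * w k) N := by
  have hwN : 0 ≤ w N := hw0 ▸ hw N.zero_le
  have hδ : ∑ m ∈ range N, (w (m + 1) - w m) * tailSum a (m + 1)
      ≤ ∑ m ∈ range N, (w (m + 1) - w m) * tailSum b (m + 1) :=
    Finset.sum_le_sum fun m _ =>
      mul_le_mul_of_nonneg_left (htail _) (sub_nonneg.2 (hw m.le_succ))
  have haN : 0 ≤ w N * tailSum a N :=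
    mul_nonneg hwN (tailSum_nonneg fun k hk => ha k (by omega))
  have hbN : w N * tailSum b N ≤ tailSum (fun k => b k * w k) N :=
    mul_tailSum_le_tailSum_mul hw hsb hbw fun k hk => hb k (by omega)
  rw [sum_range_mul_eq_sub hsa hw0, sum_range_mul_eq_sub hsb hw0]
  linarith

theorem summable_mul_and_tsum_mul_le_of_tailSum_le (hw : Monotone w) (hw0 : w 0 = 0)
    (ha : ∀ k, k ≠ i → 0 ≤ a k) (hb : ∀ k, k ≠ i → 0 ≤ b k) (hsa : Summable a)
    (hsb : Summable b) (hbw : Summable fun k => b k * w k)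
    (htail : ∀ k, tailSum a k ≤ tailSum b k) :
    Summable (fun k => a k * w k) ∧ ∑' k, a k * w k ≤ ∑' k, b k * w k := by
  have hle := fun N (hN : i < N) =>
    sum_range_mul_le_of_tailSum_le hw hw0 ha hb hsa hsb hbw htail hN
  have hR : Tendsto (fun N => ∑ k ∈ range N, b k * w k + tailSum (fun k => b k * w k) N)
      atTop (𝓝 (∑' k, b k * w k + 0)) :=
    hbw.hasSum.tendsto_sum_nat.add (tendsto_tailSum_atTop_zero hbw)
  obtain ⟨C, hC⟩ := hR.bddAbove_range
  have haw : Summable fun k => a k * w k :=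
    summable_of_sum_range_le_of_nonneg_ge (i + 1)
      (fun k hk => mul_nonneg (ha k (by omega)) (hw0 ▸ hw k.zero_le))
      fun N hN => (hle N hN).trans (hC ⟨N, rfl⟩)
  refine ⟨haw, ?_⟩
  simpa using le_of_tendsto_of_tendsto haw.hasSum.tendsto_sum_nat hR
    (eventually_gt_atTop i |>.mono hle)

end Comparison

section QMatrix

variable {q : ℕ → ℕ → ℝ} {i : ℕ} {x : ℕ → ℝ}

lemma offDiag_mul_eq_ite (q : ℕ → ℕ → ℝ) (i k : ℕ) (y : ℝ) :
    offDiag q i k * y = if k = i then 0 else q i k * y := by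
  unfold offDiag; split_ifs <;> simp

lemma IsQMatrix.nonneg_of_ne (hq : IsQMatrix q) {i k : ℕ} (h : k ≠ i) : 0 ≤ q i k :=
  hq.1 i k (Ne.symm h)

lemma IsQMatrix.diag_nonpos (hq : IsQMatrix q) (i : ℕ) : q i i ≤ 0 := hq.2.1 i

lemma IsQMatrix.summable_offDiag (hq : IsQMatrix q) (i : ℕ) : Summable (offDiag q i) :=
  hq.2.2.1 i

lemma IsQMatrix.offDiag_nonneg (hq : IsQMatrix q) (i k : ℕ) : 0 ≤ offDiag q i k := by
  unfold offDiag; split_ifs with h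
  · exact le_rfl
  · exact hq.nonneg_of_ne h

lemma summable_offDiag_mul_iff :
    Summable (fun k => offDiag q i k * x k) ↔ Summable fun k => q i k * x k := by
  classical
  constructor <;> intro h
  · refine (h.update i (q i i * x i)).congr fun k => ?_
    by_cases hk : k = i <;> simp [Function.update, offDiag, hk]
  · refine (h.update i 0).congr fun k => ?_
    by_cases hk : k = i <;> simp [Function.update, offDiag, hk]

lemma tsum_mul_eq_tsum_offDiag_mul_add (hx : Summable fun k => q i k * x k) :
    ∑' k, q i k * x k = ∑' k, offDiag q i k * x k + q i i * x i := by
  rw [hx.tsum_eq_add_tsum_ite i, add_comm]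
  simp only [offDiag_mul_eq_ite]

lemma IsQMatrix.summable_offDiag_mul (hq : IsQMatrix q) (i : ℕ) {M : ℝ} (hx0 : ∀ k, 0 ≤ x k)
    (hxM : ∀ k, x k ≤ M) : Summable fun k => offDiag q i k * x k :=
  ((hq.summable_offDiag i).mul_right M).of_nonneg_of_le
    (fun k => mul_nonneg (hq.offDiag_nonneg i k) (hx0 k))
    fun k => mul_le_mul_of_nonneg_left (hxM k) (hq.offDiag_nonneg i k)

lemma IsQMatrix.tsum_offDiag_mul_nonneg (hq : IsQMatrix q) (hx0 : ∀ k, 0 ≤ x k) :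
    0 ≤ ∑' k, offDiag q i k * x k :=
  tsum_nonneg fun k => mul_nonneg (hq.offDiag_nonneg i k) (hx0 k)

lemma IsQMatrix.summable_row (hq : IsQMatrix q) (i : ℕ) : Summable (q i) := by
  simpa using summable_offDiag_mul_iff.1
    (hq.summable_offDiag_mul i (fun _ => zero_le_one) fun _ => le_rfl)

lemma IsConservative.tsum_offDiag_mul_le (hc : IsConservative q) (hq : IsQMatrix q)
    (hx0 : ∀ k, 0 ≤ x k) (hx1 : ∀ k, x k ≤ 1) : ∑' k, offDiag q i k * x k ≤ -q i i :=
  hc i ▸ (hq.summable_offDiag_mul i hx0 hx1).tsum_le_tsum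
    (fun k => mul_le_of_le_one_right (hq.offDiag_nonneg i k) (hx1 k)) (hq.summable_offDiag i)

lemma IsConservative.tsum_row_eq_zero (hc : IsConservative q) (hq : IsQMatrix q) (i : ℕ) :
    ∑' k, q i k = 0 := by
  simpa [hc i] using tsum_mul_eq_tsum_offDiag_mul_add (x := fun _ => 1) (q := q) (i := i)
    (by simpa using hq.summable_row i)

lemma IsConservative.tsum_mul_eq_of_add_const (hc : IsConservative q) (hq : IsQMatrix q)
    {f g : ℕ → ℝ} {a : ℝ} (hf : Summable fun k => q i k * f k) (hg : ∀ k, g k = f k + a) :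
    Summable (fun k => q i k * g k) ∧ ∑' k, q i k * g k = ∑' k, q i k * f k := by
  have hsa : Summable fun k => q i k * a := (hq.summable_row i).mul_right a
  simp only [hg, mul_add]
  refine ⟨hf.add hsa, ?_⟩
  rw [hf.tsum_add hsa, tsum_mul_right, hc.tsum_row_eq_zero hq, zero_mul, add_zero]

end QMatrix

structure IsLyapunovFunction (q : ℕ → ℕ → ℝ) (c : ℝ) (ψ : ℕ → ℝ) : Prop where
  nonneg : ∀ k, 0 ≤ ψ k
  tendsto_atTop : Tendsto ψ atTop atTop
  summable_mul : ∀ i, Summable fun k => q i k * ψ k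
  tsum_mul_le : ∀ i, ∑' k, q i k * ψ k ≤ c * ψ i

namespace IsLyapunovFunction

variable {q : ℕ → ℕ → ℝ} {c lam M : ℝ} {ψ x : ℕ → ℝ}

/-- `x - ε ψ` tends to `-∞`, so it attains its maximum at some `i₀`, and there
`λ x ≤ Q x` and `Q ψ ≤ c ψ` give `λ (x - ε ψ) i₀ ≤ ε (c - λ) ψ i₀ ≤ 0`. -/
lemma le_mul_of_le_tsum (hψ : IsLyapunovFunction q c ψ) (hq : IsQMatrix q)
    (hcons : IsConservative q) (hlam0 : 0 < lam) (hlam : c < lam) (hx0 : ∀ k, 0 ≤ x k)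
    (hxM : ∀ k, x k ≤ M) (hsuper : ∀ i, lam * x i ≤ ∑' k, q i k * x k) {ε : ℝ} (hε : 0 < ε)
    (k : ℕ) : x k ≤ ε * ψ k := by
  set u : ℕ → ℝ := fun k => x k - ε * ψ k
  have hu : Tendsto u cofinite atBot := by
    rw [Nat.cofinite_eq_atTop]
    refine tendsto_atBot_mono (fun k => sub_le_sub_right (hxM k) _) ?_
    exact tendsto_atBot_add_const_left _ M
      (tendsto_neg_atTop_atBot.comp (hψ.tendsto_atTop.const_mul_atTop hε))
  obtain ⟨i₀, hi₀⟩ := hu.exists_forall_ge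
  have hx : Summable fun k => q i₀ k * x k :=
    summable_offDiag_mul_iff.1 (hq.summable_offDiag_mul i₀ hx0 hxM)
  have hterm : ∀ k, q i₀ k * x k ≤ q i₀ k * u i₀ + ε * (q i₀ k * ψ k) := by
    intro k
    by_cases hk : k = i₀
    · subst hk; exact le_of_eq (by simp only [u]; ring)
    · have := mul_le_mul_of_nonneg_left (show x k ≤ u i₀ + ε * ψ k by linarith [hi₀ k])
        (hq.nonneg_of_ne hk)
      linarith
  have hQx : ∑' k, q i₀ k * x k ≤ ε * (c * ψ i₀) := by
    have hu₀ := (hq.summable_row i₀).mul_right (u i₀)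
    have hψ₀ := (hψ.summable_mul i₀).mul_left ε
    calc ∑' k, q i₀ k * x k ≤ ∑' k, (q i₀ k * u i₀ + ε * (q i₀ k * ψ k)) :=
          hx.tsum_le_tsum hterm (hu₀.add hψ₀)
      _ = ε * ∑' k, q i₀ k * ψ k := by
          rw [hu₀.tsum_add hψ₀, tsum_mul_right, hcons.tsum_row_eq_zero hq, tsum_mul_left,
            zero_mul, zero_add]
      _ ≤ ε * (c * ψ i₀) := mul_le_mul_of_nonneg_left (hψ.tsum_mul_le i₀) hε.le
  have hui₀ : u i₀ ≤ 0 := by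
    have := hsuper i₀
    have : lam * u i₀ ≤ ε * (c - lam) * ψ i₀ := by simp only [u] at *; linarith
    nlinarith [mul_nonneg hε.le (hψ.nonneg i₀)]
  linarith [hi₀ k]

theorem eq_zero_of_le_tsum (hψ : IsLyapunovFunction q c ψ) (hq : IsQMatrix q)
    (hcons : IsConservative q) (hlam0 : 0 < lam) (hlam : c < lam) (hx0 : ∀ k, 0 ≤ x k)
    (hxM : ∀ k, x k ≤ M) (hsuper : ∀ i, lam * x i ≤ ∑' k, q i k * x k) (k : ℕ) : x k = 0 := by
  refine le_antisymm (le_of_forall_pos_le_add fun ε hε => ?_) (hx0 k)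
  have hψk : 0 < ψ k + 1 := by linarith [hψ.nonneg k]
  calc x k ≤ ε / (ψ k + 1) * ψ k :=
        hψ.le_mul_of_le_tsum hq hcons hlam0 hlam hx0 hxM hsuper (by positivity) k
    _ ≤ 0 + ε := by
        rw [zero_add, div_mul_eq_mul_div, div_le_iff₀ hψk]; nlinarith

end IsLyapunovFunction

lemma tsum_comm_of_nonneg {f : ℕ → ℕ → ℝ} (hf : ∀ k j, 0 ≤ f k j) (hk : ∀ k, Summable (f k))
    (hs : Summable fun k => ∑' j, f k j) : ∑' j, ∑' k, f k j = ∑' k, ∑' j, f k j :=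
  ((summable_prod_of_nonneg fun p => hf p.1 p.2).2 ⟨hk, hs⟩).tsum_comm

lemma aemeasurable_tsum_of_summable {α : Type*} [MeasurableSpace α] {μ : Measure α}
    {f : ℕ → α → ℝ} (hf : ∀ k, AEMeasurable (f k) μ) (hs : ∀ᵐ s ∂μ, Summable fun k => f k s) :
    AEMeasurable (fun s => ∑' k, f k s) μ :=
  aemeasurable_of_tendsto_metrizable_ae' (fun n => by fun_prop)
    (hs.mono fun _ h => h.hasSum.tendsto_sum_nat)

/-- On `t ≥ 0` the primitive of a nonnegative `f` is monotone as long as `f` is integrable on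
`[0, t]`, and it is the junk value `0` afterwards; either way it is measurable. -/
lemma aemeasurable_primitive {f : ℝ → ℝ} (hf : ∀ s, 0 ≤ s → 0 ≤ f s) :
    AEMeasurable (fun t => ∫ s in (0 : ℝ)..t, f s) (volume.restrict (Ici 0)) := by
  set A := {t : ℝ | 0 ≤ t ∧ IntervalIntegrable f volume 0 t}
  have hA : A.OrdConnected := ⟨fun t₁ h₁ t₂ h₂ t ht => ⟨h₁.1.trans ht.1,
    h₂.2.mono_set (Set.uIcc_subset_uIcc_left (Set.uIcc_of_le h₂.1 ▸ ⟨h₁.1.trans ht.1, ht.2⟩))⟩⟩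
  have hmono : MonotoneOn (fun t => ∫ s in (0 : ℝ)..t, f s) A := fun t₁ h₁ t₂ h₂ h₁₂ =>
    intervalIntegral.integral_mono_interval le_rfl h₁.1 h₁₂
      ((ae_restrict_iff' measurableSet_Ioc).2 (ae_of_all _ fun s hs => hf s hs.1.le)) h₂.2
  have hzero : AEMeasurable (fun t => ∫ s in (0 : ℝ)..t, f s) (volume.restrict (Ici 0 \ A)) :=
    aemeasurable_const.congr <| (ae_restrict_iff' (measurableSet_Ici.diff hA.measurableSet)).2 <|
      ae_of_all _ fun t ht => (intervalIntegral.integral_undef fun h => ht.2 ⟨ht.1, h⟩).symm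
  have hcover : A ∪ Ici 0 \ A = Ici (0 : ℝ) := Set.union_sdiff_cancel fun t ht => ht.1
  rw [← hcover, aemeasurable_union_iff]
  exact ⟨aemeasurable_restrict_of_monotoneOn hA.measurableSet hmono, hzero⟩

lemma tsum_intervalIntegral_eq_of_nonneg {G : ℕ → ℝ → ℝ} {t : ℝ} (ht : 0 ≤ t)
    (hG0 : ∀ j, ∀ s ∈ Ioc 0 t, 0 ≤ G j s) (hG : ∀ j, IntervalIntegrable (G j) volume 0 t)
    (hsum : Summable fun j => ∫ s in (0 : ℝ)..t, G j s) :
    ∑' j, ∫ s in (0 : ℝ)..t, G j s = ∫ s in (0 : ℝ)..t, ∑' j, G j s := by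
  simp only [intervalIntegral.integral_of_le ht] at hsum ⊢
  refine integral_tsum_of_summable_integral_norm (fun j => (hG j).1)
    (hsum.congr fun j => setIntegral_congr_fun measurableSet_Ioc fun s hs => ?_)
  exact (Real.norm_of_nonneg (hG0 j s hs)).symm

lemma integral_exp_mul_exp_mul_sub (a b t : ℝ) :
    ∫ s in (0 : ℝ)..t, Real.exp (a * (t - s)) * Real.exp (b * s) * (b - a)
      = Real.exp (b * t) - Real.exp (a * t) := by
  have hderiv : ∀ s ∈ Set.uIcc 0 t, HasDerivAt (fun s => Real.exp (a * (t - s) + b * s))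
      (Real.exp (a * (t - s)) * Real.exp (b * s) * (b - a)) s := fun s _ =>
    ((((hasDerivAt_id' s).const_sub t).const_mul a).add ((hasDerivAt_id' s).const_mul b)).exp
      |>.congr_deriv (by simp only [Pi.add_apply, Real.exp_add]; ring)
  rw [intervalIntegral.integral_eq_sub_of_hasDerivAt hderiv
    ((by fun_prop : Continuous _).intervalIntegrable _ _)]
  simp

lemma intervalIntegrable_exp_mul_of_bounded {h : ℝ → ℝ} {a C t : ℝ} (ha : a ≤ 0) (ht : 0 ≤ t)
    (hh : AEMeasurable h (volume.restrict (Ici 0))) (h0 : ∀ s, 0 ≤ s → 0 ≤ h s)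
    (hC : ∀ s, 0 ≤ s → h s ≤ C) :
    IntervalIntegrable (fun s => Real.exp (a * (t - s)) * h s) volume 0 t := by
  rw [intervalIntegrable_iff_integrableOn_Ioc_of_le ht]
  have hIoc : volume.restrict (Ioc 0 t) ≤ volume.restrict (Ici 0) :=
    Measure.restrict_mono (fun s hs => hs.1.le) le_rfl
  refine Integrable.mono' (integrableOn_const (C := C) measure_Ioc_lt_top.ne)
    ((by fun_prop : Measurable fun s => Real.exp (a * (t - s))).aemeasurable.mul
      (hh.mono_measure hIoc)).aestronglyMeasurable
    ((ae_restrict_iff' measurableSet_Ioc).2 (ae_of_all _ fun s hs => ?_))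
  have hexp : Real.exp (a * (t - s)) ≤ 1 :=
    Real.exp_le_one_iff.2 (mul_nonpos_of_nonpos_of_nonneg ha (by linarith [hs.2]))
  rw [Real.norm_eq_abs, abs_of_nonneg (mul_nonneg (Real.exp_nonneg _) (h0 s hs.1.le))]
  exact (mul_le_of_le_one_left (h0 s hs.1.le) hexp).trans (hC s hs.1.le)

noncomputable def defect (P : ℝ → ℕ → ℕ → ℝ) (k : ℕ) (t : ℝ) : ℝ := 1 - ∑' j, P t k j

namespace IsTransitionFunction

variable {P : ℝ → ℕ → ℕ → ℝ} {q : ℕ → ℕ → ℝ} {s t : ℝ}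

lemma nonneg (hP : IsTransitionFunction P) (ht : 0 ≤ t) (k j : ℕ) : 0 ≤ P t k j := hP.1 t k j ht

lemma summable (hP : IsTransitionFunction P) (ht : 0 ≤ t) (k : ℕ) : Summable (P t k) :=
  hP.2.1 t k ht

lemma tsum_le_one (hP : IsTransitionFunction P) (ht : 0 ≤ t) (k : ℕ) : ∑' j, P t k j ≤ 1 :=
  hP.2.2.1 t k ht

lemma add_apply (hP : IsTransitionFunction P) (hs : 0 ≤ s) (ht : 0 ≤ t) (k j : ℕ) :
    P (s + t) k j = ∑' m, P s k m * P t m j :=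
  hP.2.2.2.2 s t k j hs ht

lemma le_one (hP : IsTransitionFunction P) (ht : 0 ≤ t) (k j : ℕ) : P t k j ≤ 1 :=
  ((hP.summable ht k).le_tsum j fun j' _ => hP.nonneg ht k j').trans (hP.tsum_le_one ht k)

lemma tsum_tsum_mul (hP : IsTransitionFunction P) (hs : 0 ≤ s) {c : ℕ → ℝ}
    (hc0 : ∀ k, 0 ≤ c k) (hc : Summable c) :
    ∑' j, ∑' k, c k * P s k j = ∑' k, c k * ∑' j, P s k j := by
  simp_rw [← tsum_mul_left]
  refine tsum_comm_of_nonneg (fun k j => mul_nonneg (hc0 k) (hP.nonneg hs k j))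
    (fun k => (hP.summable hs k).mul_left _) (hc.of_nonneg_of_le (fun k => ?_) fun k => ?_)
  · exact tsum_nonneg fun j => mul_nonneg (hc0 k) (hP.nonneg hs k j)
  · rw [tsum_mul_left]; exact mul_le_of_le_one_right (hc0 k) (hP.tsum_le_one hs k)

lemma defect_nonneg (hP : IsTransitionFunction P) (k : ℕ) (ht : 0 ≤ t) : 0 ≤ defect P k t :=
  sub_nonneg.2 (hP.tsum_le_one ht k)

lemma defect_le_one (hP : IsTransitionFunction P) (k : ℕ) (ht : 0 ≤ t) : defect P k t ≤ 1 :=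
  sub_le_self _ (tsum_nonneg fun j => hP.nonneg ht k j)

/-- By Chapman–Kolmogorov, mass that is lost is never regained. -/
lemma monotoneOn_defect (hP : IsTransitionFunction P) (k : ℕ) :
    MonotoneOn (defect P k) (Ici 0) := by
  intro t₁ h₁ t₂ h₂ h₁₂
  have hs : (0 : ℝ) ≤ t₂ - t₁ := sub_nonneg.2 h₁₂
  have hCK : ∀ j, P t₂ k j = ∑' m, P t₁ k m * P (t₂ - t₁) m j := fun j => by
    simpa using hP.add_apply h₁ hs k j
  have hle : ∑' j, P t₂ k j ≤ ∑' j, P t₁ k j := by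
    rw [tsum_congr hCK, hP.tsum_tsum_mul hs (hP.nonneg h₁ k) (hP.summable h₁ k)]
    exact ((hP.summable h₁ k).of_nonneg_of_le
      (fun m => mul_nonneg (hP.nonneg h₁ k m) (tsum_nonneg fun j => hP.nonneg hs m j))
      fun m => mul_le_of_le_one_right (hP.nonneg h₁ k m) (hP.tsum_le_one hs m)).tsum_le_tsum
      (fun m => mul_le_of_le_one_right (hP.nonneg h₁ k m) (hP.tsum_le_one hs m))
      (hP.summable h₁ k)
  exact sub_le_sub_left hle 1

lemma aemeasurable_defect (hP : IsTransitionFunction P) (k : ℕ) :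
    AEMeasurable (defect P k) (volume.restrict (Ici 0)) :=
  aemeasurable_restrict_of_monotoneOn measurableSet_Ici (hP.monotoneOn_defect k)

lemma tsum_tsum_offDiag_mul (hP : IsTransitionFunction P) (hq : IsQMatrix q)
    (hcons : IsConservative q) (i : ℕ) (hs : 0 ≤ s) :
    ∑' j, ∑' k, offDiag q i k * P s k j = -q i i - ∑' k, offDiag q i k * defect P k s := by
  rw [hP.tsum_tsum_mul hs (hq.offDiag_nonneg i) (hq.summable_offDiag i), ← hcons i,
    ← (hq.summable_offDiag i).tsum_sub (hq.summable_offDiag_mul i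
      (fun k => hP.defect_nonneg k hs) fun k => hP.defect_le_one k hs)]
  simp only [defect, mul_sub, mul_one, sub_sub_cancel]

lemma intervalIntegrable_exp_mul_tsum_offDiag_mul_defect (hP : IsTransitionFunction P)
    (hq : IsQMatrix q) (hcons : IsConservative q) (i : ℕ) (ht : 0 ≤ t) :
    IntervalIntegrable (fun s => Real.exp (q i i * (t - s)) * ∑' k, offDiag q i k * defect P k s)
      volume 0 t :=
  intervalIntegrable_exp_mul_of_bounded (hq.diag_nonpos i) ht
    (aemeasurable_tsum_of_summable (fun k => (hP.aemeasurable_defect k).const_mul _)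
      ((ae_restrict_iff' measurableSet_Ici).2 (ae_of_all _ fun _ hs =>
        hq.summable_offDiag_mul i (fun k => hP.defect_nonneg k hs) fun k => hP.defect_le_one k hs)))
    (fun _ hs => hq.tsum_offDiag_mul_nonneg fun k => hP.defect_nonneg k hs)
    fun _ hs => hcons.tsum_offDiag_mul_le hq (fun k => hP.defect_nonneg k hs)
      fun k => hP.defect_le_one k hs

end IsTransitionFunction

namespace BackwardEq

variable {q : ℕ → ℕ → ℝ} {P : ℝ → ℕ → ℕ → ℝ} {t : ℝ}

/-- The backward equation writes `P t k j` as `e^{q_kk t}` times a constant plus the primitive of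
a nonnegative function. -/
lemma aemeasurable (hB : BackwardEq q P) (hq : IsQMatrix q) (hP : IsTransitionFunction P)
    (k j : ℕ) : AEMeasurable (fun t => P t k j) (volume.restrict (Ici 0)) := by
  set h : ℝ → ℝ := fun s => Real.exp (-q k k * s) * ∑' m, offDiag q k m * P s m j
  have h0 : ∀ s, 0 ≤ s → 0 ≤ h s := fun s hs =>
    mul_nonneg (Real.exp_nonneg _) (hq.tsum_offDiag_mul_nonneg fun m => hP.nonneg hs m j)
  have key : ∀ t, 0 ≤ t → P t k j
      = Real.exp (q k k * t) * ((if k = j then 1 else 0) + ∫ s in (0 : ℝ)..t, h s) := by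
    intro t ht
    rw [hB t k j ht, mul_add, ← intervalIntegral.integral_const_mul, mul_comm]
    congr 1
    refine intervalIntegral.integral_congr fun s _ => ?_
    simp only [h, offDiag_mul_eq_ite, ← mul_assoc, ← Real.exp_add]
    ring_nf
  have hm : AEMeasurable (fun t => Real.exp (q k k * t)
      * ((if k = j then 1 else 0) + ∫ s in (0 : ℝ)..t, h s)) (volume.restrict (Ici 0)) := by
    have := aemeasurable_primitive h0
    fun_prop
  exact hm.congr <| (ae_restrict_iff' measurableSet_Ici).2 <|
    ae_of_all _ fun t ht => (key t ht).symm

/-- Summing the backward equation over `j` (the integrands are nonnegative, so sum and integral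
commute), conservativity cancels the inhomogeneous term against `∫ e^{q_ii (t-s)} (-q_ii) ds`. -/
theorem defect_eq (hB : BackwardEq q P) (hq : IsQMatrix q) (hcons : IsConservative q)
    (hP : IsTransitionFunction P) (i : ℕ) (ht : 0 ≤ t) :
    defect P i t = ∫ s in (0 : ℝ)..t,
      Real.exp (q i i * (t - s)) * ∑' k, offDiag q i k * defect P k s := by
  set G : ℕ → ℝ → ℝ := fun j s => Real.exp (q i i * (t - s)) * ∑' k, offDiag q i k * P s k j
  have hGint : ∀ j, IntervalIntegrable (G j) volume 0 t := fun j =>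
    intervalIntegrable_exp_mul_of_bounded (hq.diag_nonpos i) ht
      (aemeasurable_tsum_of_summable (fun k => (hB.aemeasurable hq hP k j).const_mul _)
        ((ae_restrict_iff' measurableSet_Ici).2 (ae_of_all _ fun _ hs =>
          hq.summable_offDiag_mul i (fun k => hP.nonneg hs k j) fun k => hP.le_one hs k j)))
      (fun _ hs => hq.tsum_offDiag_mul_nonneg fun k => hP.nonneg hs k j)
      fun _ hs => hcons.tsum_offDiag_mul_le hq (fun k => hP.nonneg hs k j) fun k => hP.le_one hs k j
  have hPj : ∀ j, P t i j = (if i = j then 1 else 0) * Real.exp (q i i * t)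
      + ∫ s in (0 : ℝ)..t, G j s := fun j => by
    rw [hB t i j ht]
    simp only [G, offDiag_mul_eq_ite]
  have hδ : HasSum (fun j => (if i = j then (1 : ℝ) else 0) * Real.exp (q i i * t))
      (Real.exp (q i i * t)) := by
    convert hasSum_ite_eq i (Real.exp (q i i * t)) using 2 with j
    rcases eq_or_ne j i with rfl | h
    · simp
    · simp [h, h.symm]
  have hGsum : Summable fun j => ∫ s in (0 : ℝ)..t, G j s :=
    ((hP.summable ht i).sub hδ.summable).congr fun j => by rw [hPj j]; ring
  have hswap := tsum_intervalIntegral_eq_of_nonneg ht (fun j s hs => mul_nonneg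
    (Real.exp_nonneg _) (hq.tsum_offDiag_mul_nonneg fun k => hP.nonneg hs.1.le k j)) hGint hGsum
  have hflux : ∀ s ∈ Set.uIcc 0 t, ∑' j, G j s = Real.exp (q i i * (t - s)) * (-q i i)
      - Real.exp (q i i * (t - s)) * ∑' k, offDiag q i k * defect P k s := fun s hs => by
    simp only [G, tsum_mul_left]
    rw [hP.tsum_tsum_offDiag_mul hq hcons i (Set.uIcc_of_le ht ▸ hs).1, mul_sub]
  have hexp : ∫ s in (0 : ℝ)..t, Real.exp (q i i * (t - s)) * (-q i i)
      = 1 - Real.exp (q i i * t) := by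
    simpa using integral_exp_mul_exp_mul_sub (q i i) 0 t
  rw [defect, tsum_congr hPj, hδ.summable.tsum_add hGsum, hδ.tsum_eq, hswap,
    intervalIntegral.integral_congr hflux, intervalIntegral.integral_sub
      ((by fun_prop : Continuous _).intervalIntegrable _ _)
      (hP.intervalIntegrable_exp_mul_tsum_offDiag_mul_defect hq hcons i ht), hexp]
  ring

lemma mul_defect_le (hB : BackwardEq q P) (hq : IsQMatrix q) (hcons : IsConservative q)
    (hP : IsTransitionFunction P) {lam M : ℝ} (hlam : 0 < lam) {x : ℕ → ℝ}
    (hx0 : ∀ k, 0 ≤ x k) (hxM : ∀ k, x k ≤ M)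
    (hdx : ∀ k s, 0 ≤ s → s ≤ t → defect P k s ≤ Real.exp (lam * s) * x k) (i : ℕ)
    (ht : 0 ≤ t) :
    (lam - q i i) * defect P i t ≤ Real.exp (lam * t) * ∑' k, offDiag q i k * x k := by
  set X := ∑' k, offDiag q i k * x k
  have hqlam : 0 ≤ lam - q i i := by linarith [hq.diag_nonpos i]
  have hflux : ∀ s ∈ Icc 0 t, Real.exp (q i i * (t - s)) * ∑' k, offDiag q i k * defect P k s
      ≤ Real.exp (q i i * (t - s)) * Real.exp (lam * s) * X := fun s hs => by
    rw [mul_assoc]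
    refine mul_le_mul_of_nonneg_left ?_ (Real.exp_nonneg _)
    rw [← tsum_mul_left]
    refine (hq.summable_offDiag_mul i (fun k => hP.defect_nonneg k hs.1)
      fun k => hP.defect_le_one k hs.1).tsum_le_tsum (fun k => ?_)
      ((hq.summable_offDiag_mul i hx0 hxM).mul_left (Real.exp (lam * s)))
    rw [mul_left_comm]
    exact mul_le_mul_of_nonneg_left (hdx k s hs.1 hs.2) (hq.offDiag_nonneg i k)
  calc (lam - q i i) * defect P i t
      ≤ (lam - q i i) * ∫ s in (0 : ℝ)..t,
          Real.exp (q i i * (t - s)) * Real.exp (lam * s) * X := by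
        rw [hB.defect_eq hq hcons hP i ht]
        exact mul_le_mul_of_nonneg_left (intervalIntegral.integral_mono_on ht
          (hP.intervalIntegrable_exp_mul_tsum_offDiag_mul_defect hq hcons i ht)
          ((by fun_prop : Continuous _).intervalIntegrable _ _) hflux) hqlam
    _ = X * (Real.exp (lam * t) - Real.exp (q i i * t)) := by
        rw [← integral_exp_mul_exp_mul_sub, ← intervalIntegral.integral_const_mul,
          ← intervalIntegral.integral_const_mul]
        congr 1 with s
        ring
    _ ≤ Real.exp (lam * t) * X := by
        nlinarith [Real.exp_pos (q i i * t), hq.tsum_offDiag_mul_nonneg (i := i) hx0]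

theorem exists_le_tsum_and_defect_le (hB : BackwardEq q P) (hq : IsQMatrix q)
    (hcons : IsConservative q) (hP : IsTransitionFunction P) {lam : ℝ} (hlam : 0 < lam)
    (ht : 0 ≤ t) :
    ∃ x : ℕ → ℝ, (∀ k, 0 ≤ x k) ∧ (∀ k, x k ≤ 1) ∧ (∀ i, lam * x i ≤ ∑' k, q i k * x k) ∧
      ∀ k, defect P k t ≤ Real.exp (lam * t) * x k := by
  have : Nonempty (Icc 0 t) := ⟨⟨0, Set.left_mem_Icc.2 ht⟩⟩
  set x : ℕ → ℝ := fun k => ⨆ s : Icc 0 t, Real.exp (-(lam * s)) * defect P k s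
  have hle1 : ∀ k (s : Icc 0 t), Real.exp (-(lam * s)) * defect P k s ≤ 1 := fun k s =>
    mul_le_one₀ (Real.exp_le_one_iff.2 (by nlinarith [s.2.1])) (hP.defect_nonneg k s.2.1)
      (hP.defect_le_one k s.2.1)
  have hle_x : ∀ k (s : Icc 0 t), Real.exp (-(lam * s)) * defect P k s ≤ x k := fun k s =>
    le_ciSup ⟨1, Set.forall_mem_range.2 (hle1 k)⟩ s
  have hx0 : ∀ k, 0 ≤ x k := fun k => (mul_nonneg (Real.exp_nonneg _)
    (hP.defect_nonneg k le_rfl)).trans (hle_x k ⟨0, Set.left_mem_Icc.2 ht⟩)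
  have hx1 : ∀ k, x k ≤ 1 := fun k => ciSup_le (hle1 k)
  have hdx : ∀ k s, 0 ≤ s → s ≤ t → defect P k s ≤ Real.exp (lam * s) * x k :=
    fun k s h0 h1 => by
      have := mul_le_mul_of_nonneg_left (hle_x k ⟨s, h0, h1⟩) (Real.exp_nonneg (lam * s))
      rwa [← mul_assoc, ← Real.exp_add, add_neg_cancel, Real.exp_zero, one_mul] at this
  refine ⟨x, hx0, hx1, fun i => ?_, fun k => hdx k t ht le_rfl⟩
  have hqlam : 0 < lam - q i i := by linarith [hq.diag_nonpos i]
  have hxi : x i ≤ (∑' k, offDiag q i k * x k) / (lam - q i i) := ciSup_le fun s => by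
    rw [le_div_iff₀ hqlam, mul_assoc, mul_comm (defect P i s), ← le_div_iff₀' (Real.exp_pos _),
      Real.exp_neg, div_inv_eq_mul, mul_comm (∑' k, _)]
    exact hB.mul_defect_le hq hcons hP hlam hx0 hx1
      (fun k s' h0 h1 => hdx k s' h0 (h1.trans s.2.2)) i s.2.1
  rw [le_div_iff₀ hqlam] at hxi
  rw [tsum_mul_eq_tsum_offDiag_mul_add (summable_offDiag_mul_iff.1
    (hq.summable_offDiag_mul i hx0 hx1))]
  linarith

end BackwardEq

theorem IsLyapunovFunction.tsum_eq_one {q : ℕ → ℕ → ℝ} {P : ℝ → ℕ → ℕ → ℝ} {c t : ℝ}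
    {ψ : ℕ → ℝ} (hψ : IsLyapunovFunction q c ψ) (hq : IsQMatrix q) (hcons : IsConservative q)
    (hP : IsTransitionFunction P) (hB : BackwardEq q P) (ht : 0 ≤ t) (i : ℕ) :
    ∑' j, P t i j = 1 := by
  have hlam0 : 0 < max c 0 + 1 := by positivity
  have hlam : c < max c 0 + 1 := by linarith [le_max_left c 0]
  obtain ⟨x, hx0, hx1, hsuper, hdx⟩ := hB.exists_le_tsum_and_defect_le hq hcons hP hlam0 ht
  have hd : defect P i t ≤ 0 := by
    simpa [hψ.eq_zero_of_le_tsum hq hcons hlam0 hlam hx0 hx1 hsuper i] using hdx i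
  linarith [hP.defect_nonneg i ht, show defect P i t = 1 - ∑' j, P t i j from rfl]

theorem IsRegularQ.of_isLyapunovFunction {q : ℕ → ℕ → ℝ} {c : ℝ} {ψ : ℕ → ℝ}
    (hq : IsQMatrix q) (hcons : IsConservative q) (hψ : IsLyapunovFunction q c ψ) :
    IsRegularQ q :=
  ⟨hcons, fun _ hPm _ ht i => hψ.tsum_eq_one hq hcons hPm.1 hPm.2.1 ht i⟩

theorem IsLyapunovFunction.of_tailSum_le {q₁ q₂ : ℕ → ℕ → ℝ} {c : ℝ} {ψ : ℕ → ℝ}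
    (hψ : IsLyapunovFunction q₂ c ψ) (hψm : Monotone ψ) (hq₁ : IsQMatrix q₁)
    (hq₂ : IsQMatrix q₂) (hc₁ : IsConservative q₁) (hc₂ : IsConservative q₂)
    (htail : ∀ i k, tailSum (q₁ i) k ≤ tailSum (q₂ i) k) : IsLyapunovFunction q₁ c ψ := by
  have hrow : ∀ i, Summable (fun k => q₁ i k * ψ k) ∧ ∑' k, q₁ i k * ψ k ≤ c * ψ i := by
    intro i
    have hw₂ := hc₂.tsum_mul_eq_of_add_const hq₂ (hψ.summable_mul i) (g := fun k => ψ k - ψ 0)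
      fun k => sub_eq_add_neg _ _
    obtain ⟨hw₁, hle⟩ := summable_mul_and_tsum_mul_le_of_tailSum_le (w := fun k => ψ k - ψ 0)
      (i := i) (fun _ _ h => sub_le_sub_right (hψm h) _) (sub_self _)
      (fun _ hk => hq₁.nonneg_of_ne hk) (fun _ hk => hq₂.nonneg_of_ne hk)
      (hq₁.summable_row i) (hq₂.summable_row i) hw₂.1 (htail i)
    obtain ⟨hs₁, he₁⟩ := hc₁.tsum_mul_eq_of_add_const hq₁ hw₁ (g := ψ) fun k => by ring
    exact ⟨hs₁, he₁ ▸ (hle.trans_eq hw₂.2).trans (hψ.tsum_mul_le i)⟩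
  exact ⟨hψ.nonneg, hψ.tendsto_atTop, fun i => (hrow i).1, fun i => (hrow i).2⟩

theorem statement15_general (q1 q2 : ℕ → ℕ → ℝ) (hq1 : IsQMatrix q1) (hq2 : IsQMatrix q2)
    (hc1 : IsConservative q1) (hc2 : IsConservative q2)
    (h12 : Cond12 q1 q2)
    (φ : ℕ → ℝ) (hφ0 : ∀ i, 0 ≤ φ i) (hφmono : Monotone φ)
    (hφtop : Filter.Tendsto φ Filter.atTop Filter.atTop)
    (c : ℝ)
    (hsum : ∀ i, Summable (fun j => q2 i j * (φ j - φ i)))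
    (hLyap : ∀ i, (∑' j, q2 i j * (φ j - φ i)) ≤ c * (1 + φ i)) :
    IsRegularQ q1 ∧ IsRegularQ q2 := by
  have hrow : ∀ i, Summable (fun k => q2 i k * (1 + φ k)) ∧
      ∑' k, q2 i k * (1 + φ k) ≤ c * (1 + φ i) := by
    intro i
    obtain ⟨hs, he⟩ := hc2.tsum_mul_eq_of_add_const hq2 (hsum i) (g := fun k => 1 + φ k)
      (a := 1 + φ i) fun k => by ring
    exact ⟨hs, he ▸ hLyap i⟩
  have hψ₂ : IsLyapunovFunction q2 c (fun k => 1 + φ k) :=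
    ⟨fun k => by linarith [hφ0 k], tendsto_atTop_add_const_left _ 1 hφtop,
      fun i => (hrow i).1, fun i => (hrow i).2⟩
  have hψ₁ : IsLyapunovFunction q1 c (fun k => 1 + φ k) :=
    hψ₂.of_tailSum_le (fun _ _ h => by simpa using hφmono h) hq1 hq2 hc1 hc2
      fun i k => h12 i i le_rfl k ((le_or_gt k i).imp id id)
  exact ⟨.of_isLyapunovFunction hq1 hc1 hψ₁, .of_isLyapunovFunction hq2 hc2 hψ₂⟩

/-- if conservative `q1`, `q2` satisfy (1.2) and there is a nonnegative
nondecreasing `φ` with `φ_i → ∞` and `∑_j q2 i j (φ_j − φ_i) ≤ c(1 + φ_i)`,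
then both `q1` and `q2` are regular. -/
theorem statement15 (q1 q2 : ℕ → ℕ → ℝ) (hq1 : IsQMatrix q1) (hq2 : IsQMatrix q2)
    (hc1 : IsConservative q1) (hc2 : IsConservative q2)
    (h12 : Cond12 q1 q2)
    (φ : ℕ → ℝ) (hφ0 : ∀ i, 0 ≤ φ i) (hφmono : Monotone φ)
    (hφtop : Filter.Tendsto φ Filter.atTop Filter.atTop)
    (c : ℝ) (hc : 0 ≤ c)
    (hsum : ∀ i, Summable (fun j => q2 i j * (φ j - φ i)))
    (hLyap : ∀ i, (∑' j, q2 i j * (φ j - φ i)) ≤ c * (1 + φ i)) :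
    IsRegularQ q1 ∧ IsRegularQ q2 :=
  statement15_general q1 q2 hq1 hq2 hc1 hc2 h12 φ hφ0 hφmono hφtop c hsum hLyap
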